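/- arXiv:2405.14104 — 6 statements merged into one kernel-verified Lean document; each statement's English description precedes it below -/
import Mathlib

section
/- Suppose every Q ∈ 𝐐 satisfies instrument exogeneity and generalized monotonicity, 𝐐 satisfies unrestricted potential outcomes, and 𝐐' is any set of latent distributions with 𝐐 ⊆ 𝐐' ⊆ 𝐐*_{MI}. Then for any P with P{Z = z} > 0 for all z ∈ 𝒵 and 𝐐₀(P, 𝐐) ≠ ∅, one has Θ₀(P, 𝐐) = Θ₀(P, 𝐐') = Θ₀(P, 𝐐*_{MI}). -/
open Finset

/-- A probability mass function on a finite type. -/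
structure ProbMass (α : Type) [Fintype α] where
  mass : α → ℝ
  nonneg : ∀ a, 0 ≤ mass a
  total : ∑ a, mass a = 1

/-- Probability of an event under a probability mass function. -/
noncomputable def pr {α : Type} [Fintype α] (Q : ProbMass α) (A : Set α) : ℝ :=
  ∑ a, A.indicator Q.mass a

/-- Expectation of a real-valued function under a probability mass function. -/
noncomputable def expect {α : Type} [Fintype α] (Q : ProbMass α) (f : α → ℝ) : ℝ :=
  ∑ a, Q.mass a * f a

/-- The latent space: potential outcomes `(Y_d)_{d ∈ D}` taking values in the finite set
`𝒴 ⊂ ℝ`, potential treatments `(D_z)_{z ∈ Z}`, and the instrument `Z`. -/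
abbrev Latent (𝒴 : Finset ℝ) (D Z : Type) : Type := (D → ↥𝒴) × (Z → D) × Z

/-- The observed space: `(Y, D, Z)`. -/
abbrev Obs (𝒴 : Finset ℝ) (D Z : Type) : Type := ↥𝒴 × D × Z

variable {𝒴 : Finset ℝ} {D Z : Type} [Fintype D] [DecidableEq D] [Fintype Z] [DecidableEq Z]

/-- The map `T` sending `((y_d), (d_z), z)` to `(y_{d_z}, d_z, z)`. -/
def Tmap (ω : Latent 𝒴 D Z) : Obs 𝒴 D Z := (ω.1 (ω.2.1 ω.2.2), ω.2.1 ω.2.2, ω.2.2)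

/-- `Q` rationalizes `P`: `P = Q ∘ T⁻¹`. -/
def Rationalizes (Q : ProbMass (Latent 𝒴 D Z)) (P : ProbMass (Obs 𝒴 D Z)) : Prop :=
  ∀ o : Obs 𝒴 D Z, P.mass o = pr Q {ω | Tmap ω = o}

/-- Instrument exogeneity: `((Y_d), (D_z))` is independent of `Z` under `Q`. -/
def Exog (Q : ProbMass (Latent 𝒴 D Z)) : Prop :=
  ∀ (yd : D → ↥𝒴) (dz : Z → D) (z : Z),
    pr Q {ω | ω.1 = yd ∧ ω.2.1 = dz ∧ ω.2.2 = z}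
      = pr Q {ω | ω.1 = yd ∧ ω.2.1 = dz} * pr Q {ω | ω.2.2 = z}

/-- `zs` maximally encourages treatment `d` under `Q`:
`Q{D_{zs} ≠ d and D_{z'} = d for some z'} = 0`. -/
def MaxEnc (Q : ProbMass (Latent 𝒴 D Z)) (d : D) (zs : Z) : Prop :=
  pr Q {ω | ω.2.1 zs ≠ d ∧ ∃ z' : Z, ω.2.1 z' = d} = 0

/-- Generalized monotonicity. -/
def GenMono (Q : ProbMass (Latent 𝒴 D Z)) : Prop :=
  ∀ d : D, ∃ zs : Z, MaxEnc Q d zs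

/-- `θ(Q) = (E_Q[Y_d])_{d ∈ D}`, the vector of average potential outcomes. -/
noncomputable def theta (Q : ProbMass (Latent 𝒴 D Z)) : D → ℝ :=
  fun d => expect Q fun ω => (ω.1 d : ℝ)

/-- `𝐐₀(P, 𝐐)`: the set of `Q ∈ 𝐐` that rationalize `P`. -/
def Q0 (P : ProbMass (Obs 𝒴 D Z)) (QQ : Set (ProbMass (Latent 𝒴 D Z))) :
    Set (ProbMass (Latent 𝒴 D Z)) :=
  {Q | Q ∈ QQ ∧ Rationalizes Q P}

/-- `Θ₀(P, 𝐐)`: the identified set for `θ(Q)`. -/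
noncomputable def Theta0 (P : ProbMass (Obs 𝒴 D Z))
    (QQ : Set (ProbMass (Latent 𝒴 D Z))) : Set (D → ℝ) :=
  theta '' Q0 P QQ

/-- Unrestricted potential outcomes: if `Q ∈ 𝐐`, `Q'` is exogenous, and the potential
treatments have the same distribution under `Q'` as under `Q`, then `Q' ∈ 𝐐`. -/
def UnrestrictedPO (QQ : Set (ProbMass (Latent 𝒴 D Z))) : Prop :=
  ∀ Q ∈ QQ, ∀ Q' : ProbMass (Latent 𝒴 D Z), Exog Q' →
    (∀ dz : Z → D, pr Q' {ω | ω.2.1 = dz} = pr Q {ω | ω.2.1 = dz}) → Q' ∈ QQ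

/-- `P{Z = z}`. -/
noncomputable def prZ (P : ProbMass (Obs 𝒴 D Z)) (z : Z) : ℝ :=
  pr P {o | o.2.2 = z}

/-- `P{D = d ∣ Z = z}`. -/
noncomputable def condD (P : ProbMass (Obs 𝒴 D Z)) (d : D) (z : Z) : ℝ :=
  pr P {o | o.2.1 = d ∧ o.2.2 = z} / prZ P z

/-- `p_{yd|z} = P{Y = y, D = d ∣ Z = z}`. -/
noncomputable def pObs (P : ProbMass (Obs 𝒴 D Z)) (y : ℝ) (d : D) (z : Z) : ℝ :=
  pr P {o | (o.1 : ℝ) = y ∧ o.2.1 = d ∧ o.2.2 = z} / prZ P z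

/-- `β_{d|z} = E_P[Y · 1{D = d} ∣ Z = z]`. -/
noncomputable def betaObs (P : ProbMass (Obs 𝒴 D Z)) (d : D) (z : Z) : ℝ :=
  (expect P fun o => if o.2.1 = d ∧ o.2.2 = z then (o.1 : ℝ) else 0) / prZ P z

/-- Mean independence: `E_Q[Y_d ∣ Z = z] = E_Q[Y_d]` for all `d` and all `z` with
`Q{Z = z} > 0`. -/
def MeanIndep {𝒴 : Finset ℝ} {D Z : Type} [Fintype D] [DecidableEq D]
    [Fintype Z] [DecidableEq Z] (Q : ProbMass (Latent 𝒴 D Z)) : Prop :=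
  ∀ (d : D) (z : Z), 0 < pr Q {ω | ω.2.2 = z} →
    (expect Q fun ω => if ω.2.2 = z then (ω.1 d : ℝ) else 0) / pr Q {ω | ω.2.2 = z}
      = theta Q d

/-! Given `Q ∈ 𝐐` and a mean-independent `Q'`, both rationalizing `P`, modify `Q` as follows: for
every treatment `d`, on the event that no instrument value selects `d`, replace `Y_d` by an
independent draw from the law of `Y_d` under `Q'` given `Z = z_d, D_{z_d} ≠ d`, where `z_d`
maximally encourages `d`. Observed data, instrument and treatment profile are untouched and
exogeneity survives, so the result lies in `𝐐` and rationalizes `P`. By generalized monotonicity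
the replaced event is `{D_{z_d} ≠ d}` up to a null set, while mean independence of `Q'` at `z_d`
writes `E_{Q'}[Y_d] · P{Z = z_d}` as an observed compliers' term plus the never-takers' term that
the draws reproduce; so both distributions have the same `θ`. The other inclusions are trivial. -/

namespace ProbMass

variable {α β ι : Type} [Fintype α] [Fintype β]

theorem pr_nonneg (Q : ProbMass α) (A : Set α) : 0 ≤ pr Q A :=
  Finset.sum_nonneg fun a _ => Set.indicator_nonneg (fun a _ => Q.nonneg a) a

theorem pr_eq_expect (Q : ProbMass α) (A : Set α) : pr Q A = expect Q (A.indicator 1) := by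
  simp only [pr, _root_.expect, ← Set.indicator_mul_right, Pi.one_apply, mul_one]

theorem pr_singleton (Q : ProbMass α) (a : α) : pr Q {a} = Q.mass a := by
  classical
  simp [pr, Set.indicator_apply]

theorem mass_eq_zero_of_pr_eq_zero {Q : ProbMass α} {A : Set α} (hA : pr Q A = 0) {a : α}
    (ha : a ∈ A) : Q.mass a = 0 := by
  have := (Finset.sum_eq_zero_iff_of_nonneg fun a _ =>
    Set.indicator_nonneg (fun a _ => Q.nonneg a) a).1 hA a (Finset.mem_univ a)
  rwa [Set.indicator_of_mem ha] at this

theorem expect_congr_of_pr_eq_zero {Q : ProbMass α} {A : Set α} (hA : pr Q A = 0)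
    {f g : α → ℝ} (h : ∀ a ∉ A, f a = g a) : expect Q f = expect Q g := by
  refine Finset.sum_congr rfl fun a _ => ?_
  by_cases ha : a ∈ A
  · simp [mass_eq_zero_of_pr_eq_zero hA ha]
  · rw [h a ha]

theorem pr_congr_of_pr_eq_zero {Q : ProbMass α} {A : Set α} (hA : pr Q A = 0) {S T : Set α}
    (h : ∀ a ∉ A, (a ∈ S ↔ a ∈ T)) : pr Q S = pr Q T := by
  rw [pr_eq_expect, pr_eq_expect]
  refine expect_congr_of_pr_eq_zero hA fun a ha => ?_
  by_cases haS : a ∈ S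
  · simp [haS, (h a ha).1 haS]
  · simp [haS, mt (h a ha).2 haS]

theorem expect_const (Q : ProbMass α) (c : ℝ) : expect Q (fun _ => c) = c := by
  rw [_root_.expect, ← Finset.sum_mul, Q.total, one_mul]

theorem expect_add (Q : ProbMass α) (f g : α → ℝ) :
    expect Q (fun a => f a + g a) = expect Q f + expect Q g := by
  simp only [_root_.expect, mul_add, Finset.sum_add_distrib]

theorem sum_pr_fiber_mul (Q : ProbMass α) (f : α → β) (g : β → ℝ) :
    ∑ b, pr Q {a | f a = b} * g b = expect Q (fun a => g (f a)) := by
  classical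
  simp only [pr, _root_.expect, Set.indicator_apply, Set.mem_ofPred_eq, Finset.sum_mul, ite_mul,
    zero_mul]
  rw [Finset.sum_comm]
  simp

noncomputable def map (Q : ProbMass α) (f : α → β) : ProbMass β where
  mass b := pr Q {a | f a = b}
  nonneg b := pr_nonneg Q _
  total := by simpa [expect_const] using sum_pr_fiber_mul Q f 1

theorem expect_map (Q : ProbMass α) (f : α → β) (g : β → ℝ) :
    expect (Q.map f) g = expect Q (fun a => g (f a)) :=
  sum_pr_fiber_mul Q f g

noncomputable def prod (Q : ProbMass α) (R : ProbMass β) : ProbMass (α × β) where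
  mass p := Q.mass p.1 * R.mass p.2
  nonneg p := mul_nonneg (Q.nonneg _) (R.nonneg _)
  total := by rw [Fintype.sum_prod_type, ← Finset.sum_mul_sum, Q.total, R.total, one_mul]

theorem expect_prod (Q : ProbMass α) (R : ProbMass β) (f : α × β → ℝ) :
    expect (Q.prod R) f = expect Q (fun a => expect R (fun b => f (a, b))) := by
  simp only [_root_.expect, prod, Fintype.sum_prod_type, Finset.mul_sum, mul_assoc]

noncomputable def pi [Fintype ι] [DecidableEq ι] (ρ : ι → ProbMass β) : ProbMass (ι → β) where
  mass f := ∏ i, (ρ i).mass (f i)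
  nonneg f := Finset.prod_nonneg fun i _ => (ρ i).nonneg _
  total := by simp [← Fintype.prod_sum, ProbMass.total]

theorem expect_pi_apply [Fintype ι] [DecidableEq ι] (ρ : ι → ProbMass β) (i : ι)
    (g : β → ℝ) : expect (pi ρ) (fun f => g (f i)) = expect (ρ i) g := by
  have hsum : ∀ j, ∑ b, (ρ j).mass b * (if j = i then g b else 1)
      = if j = i then expect (ρ i) g else 1 := by
    intro j
    split_ifs with hj
    · subst hj; rfl
    · simp [ProbMass.total]
  calc expect (pi ρ) (fun f => g (f i))
      = ∑ f : ι → β, ∏ j, (ρ j).mass (f j) * (if j = i then g (f j) else 1) := by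
        simp only [_root_.expect, pi, Finset.prod_mul_distrib, Finset.prod_ite_eq',
          Finset.mem_univ, if_true]
    _ = expect (ρ i) g := by
        rw [← Fintype.prod_sum (fun j b => (ρ j).mass b * (if j = i then g b else 1))]
        simp only [hsum, Finset.prod_ite_eq', Finset.mem_univ, if_true]

/-- `Q` conditioned on `A`; when `A` is `Q`-null this is `Q` itself. -/
noncomputable def cond (Q : ProbMass α) (A : Set α) : ProbMass α where
  mass a := if pr Q A = 0 then Q.mass a else A.indicator Q.mass a / pr Q A
  nonneg a := by
    split_ifs
    · exact Q.nonneg a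
    · exact div_nonneg (Set.indicator_nonneg (fun a _ => Q.nonneg a) a) (pr_nonneg Q A)
  total := by
    split_ifs with hA
    · exact Q.total
    · rw [← Finset.sum_div]; exact div_self hA

theorem pr_mul_expect_cond (Q : ProbMass α) (A : Set α) (f : α → ℝ) :
    pr Q A * expect (Q.cond A) f = expect Q (A.indicator f) := by
  by_cases hA : pr Q A = 0
  · rw [hA, zero_mul]
    refine (Finset.sum_eq_zero fun a _ => ?_).symm
    by_cases ha : a ∈ A
    · rw [mass_eq_zero_of_pr_eq_zero hA ha, zero_mul]
    · rw [Set.indicator_of_notMem ha, mul_zero]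
  · simp only [_root_.expect, cond, if_neg hA, Finset.mul_sum]
    refine Finset.sum_congr rfl fun a _ => ?_
    by_cases ha : a ∈ A
    · simp only [Set.indicator_of_mem ha]; field_simp
    · simp [Set.indicator_of_notMem ha]

end ProbMass

section Latent

variable {Q : ProbMass (Latent 𝒴 D Z)} {P : ProbMass (Obs 𝒴 D Z)}

theorem Rationalizes.expect_comp_Tmap (hR : Rationalizes Q P) (h : Obs 𝒴 D Z → ℝ) :
    expect Q (fun ω => h (Tmap ω)) = expect P h := by
  rw [← ProbMass.sum_pr_fiber_mul]
  exact Finset.sum_congr rfl fun o _ => by rw [hR o]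

theorem Rationalizes.pr_preimage (hR : Rationalizes Q P) (A : Set (Obs 𝒴 D Z)) :
    pr Q (Tmap ⁻¹' A) = pr P A := by
  rw [ProbMass.pr_eq_expect, ProbMass.pr_eq_expect, ← hR.expect_comp_Tmap]
  rfl

theorem Rationalizes.pr_instrument (hR : Rationalizes Q P) (z : Z) :
    pr Q {ω | ω.2.2 = z} = prZ P z :=
  hR.pr_preimage {o | o.2.2 = z}

theorem Rationalizes.expect_ite_takes (hR : Rationalizes Q P) (d : D) (z : Z) :
    expect Q (fun ω => if ω.2.2 = z ∧ ω.2.1 z = d then (ω.1 d : ℝ) else 0)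
      = expect P (fun o => if o.2.2 = z ∧ o.2.1 = d then (o.1 : ℝ) else 0) := by
  rw [← hR.expect_comp_Tmap]
  congr 1
  funext ⟨y, dz, z'⟩
  simp only [Tmap]
  by_cases hz : z' = z
  · subst hz
    split_ifs <;> simp_all
  · simp [hz]

theorem Rationalizes.pr_not_takes (hR : Rationalizes Q P) (d : D) (z : Z) :
    pr Q {ω | ω.2.2 = z ∧ ω.2.1 z ≠ d} = pr P {o | o.2.2 = z ∧ o.2.1 ≠ d} := by
  rw [← hR.pr_preimage]
  congr 1
  ext ⟨y, dz, z'⟩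
  simp only [Set.mem_ofPred_eq, Set.mem_preimage, Tmap]
  constructor <;> rintro ⟨rfl, h⟩ <;> exact ⟨rfl, h⟩

theorem Exog.mass_eq (hQ : Exog Q) (yd : D → 𝒴) (dz : Z → D) (z : Z) :
    Q.mass (yd, dz, z) = (∑ z', Q.mass (yd, dz, z')) * pr Q {ω | ω.2.2 = z} := by
  have hpt : {ω : Latent 𝒴 D Z | ω.1 = yd ∧ ω.2.1 = dz ∧ ω.2.2 = z} = {(yd, dz, z)} := by
    ext ⟨a, b, c⟩
    simp
  have hfib : pr Q {ω | ω.1 = yd ∧ ω.2.1 = dz} = ∑ z', Q.mass (yd, dz, z') := by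
    simp only [pr, Set.indicator_apply, Set.mem_ofPred_eq, Fintype.sum_prod_type, ite_and]
    rw [Finset.sum_eq_single yd (by simp_all) (by simp),
      Finset.sum_eq_single dz (by simp_all) (by simp)]
    simp
  have h := hQ yd dz z
  rwa [hpt, hfib, ProbMass.pr_singleton] at h

theorem Exog.expect_ite (hQ : Exog Q) (g : (D → 𝒴) → (Z → D) → ℝ) (z : Z) :
    expect Q (fun ω => if ω.2.2 = z then g ω.1 ω.2.1 else 0)
      = expect Q (fun ω => g ω.1 ω.2.1) * pr Q {ω | ω.2.2 = z} := by
  simp only [_root_.expect, Fintype.sum_prod_type, mul_ite, mul_zero, Finset.sum_ite_eq',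
    Finset.mem_univ, if_true]
  rw [Finset.sum_mul]
  refine Finset.sum_congr rfl fun yd _ => ?_
  rw [Finset.sum_mul]
  refine Finset.sum_congr rfl fun dz _ => ?_
  rw [hQ.mass_eq, Finset.sum_mul, Finset.sum_mul, Finset.sum_mul]
  exact Finset.sum_congr rfl fun _ _ => by ring

theorem Exog.pr_and (hQ : Exog Q) (p : (D → 𝒴) → (Z → D) → Prop) (z : Z) :
    pr Q {ω | ω.2.2 = z ∧ p ω.1 ω.2.1} = pr Q {ω | p ω.1 ω.2.1} * pr Q {ω | ω.2.2 = z} := by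
  classical
  have h := hQ.expect_ite (fun a b => if p a b then 1 else 0) z
  rw [ProbMass.pr_eq_expect Q {ω | ω.2.2 = z ∧ p ω.1 ω.2.1},
    ProbMass.pr_eq_expect Q {ω | p ω.1 ω.2.1}]
  convert h using 4 <;> simp [Set.indicator_apply, ite_and]

theorem MeanIndep.theta_mul_pr (hMI : MeanIndep Q) {z : Z} (hz : 0 < pr Q {ω | ω.2.2 = z})
    (d : D) :
    theta Q d * pr Q {ω | ω.2.2 = z}
      = expect Q (fun ω => if ω.2.2 = z then (ω.1 d : ℝ) else 0) := by
  rw [← hMI d z hz, div_mul_cancel₀ _ hz.ne']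

end Latent

section Resampling

variable {Q : ProbMass (Latent 𝒴 D Z)}

def replaceUntaken (ω : Latent 𝒴 D Z) (y : D → 𝒴) : Latent 𝒴 D Z :=
  (fun d => if d ∈ Set.range ω.2.1 then ω.1 d else y d, ω.2)

noncomputable def resampleUntaken (Q : ProbMass (Latent 𝒴 D Z)) (R : ProbMass (D → 𝒴)) :
    ProbMass (Latent 𝒴 D Z) :=
  (Q.prod R).map fun p => replaceUntaken p.1 p.2

variable (Q) (R : ProbMass (D → 𝒴))

theorem expect_resampleUntaken (f : Latent 𝒴 D Z → ℝ) :
    expect (resampleUntaken Q R) f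
      = expect Q (fun ω => expect R (fun y => f (replaceUntaken ω y))) := by
  rw [resampleUntaken, ProbMass.expect_map, ProbMass.expect_prod]

theorem pr_resampleUntaken (S : Set (Latent 𝒴 D Z)) :
    pr (resampleUntaken Q R) S = expect Q (fun ω => pr R {y | replaceUntaken ω y ∈ S}) := by
  simp only [ProbMass.pr_eq_expect, expect_resampleUntaken]
  rfl

theorem pr_resampleUntaken_of_invariant {S : Set (Latent 𝒴 D Z)}
    (hS : ∀ ω y, replaceUntaken ω y ∈ S ↔ ω ∈ S) : pr (resampleUntaken Q R) S = pr Q S := by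
  rw [pr_resampleUntaken, ProbMass.pr_eq_expect]
  congr 1
  funext ω
  by_cases hω : ω ∈ S <;> simp [hS, hω, pr, R.total]

variable {Q}

theorem Rationalizes.resampleUntaken {P : ProbMass (Obs 𝒴 D Z)} (hR : Rationalizes Q P) :
    Rationalizes (resampleUntaken Q R) P := fun o =>
  (hR o).trans (pr_resampleUntaken_of_invariant Q R fun ω y => by
    simp [Tmap, replaceUntaken]).symm

theorem Exog.resampleUntaken (hQ : Exog Q) : Exog (resampleUntaken Q R) := by
  intro yd dz z
  rw [pr_resampleUntaken, pr_resampleUntaken,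
    pr_resampleUntaken_of_invariant Q R (S := {ω | ω.2.2 = z}) fun _ _ => Iff.rfl]
  convert hQ.expect_ite
    (fun a b => pr R {y | replaceUntaken (a, b, z) y ∈ {ω | ω.1 = yd ∧ ω.2.1 = dz}}) z using 2
  · funext ⟨a, b, c⟩
    by_cases hc : c = z
    · subst hc
      simp [replaceUntaken]
    · simp [replaceUntaken, hc, pr]
  · rfl

theorem theta_resampleUntaken (d : D) :
    theta (resampleUntaken Q R) d
      = expect Q (fun ω => if d ∈ Set.range ω.2.1 then (ω.1 d : ℝ) else 0)
        + pr Q {ω | d ∉ Set.range ω.2.1} * expect R (fun y => (y d : ℝ)) := by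
  rw [theta, expect_resampleUntaken, pr, _root_.expect, _root_.expect, Finset.sum_mul,
    ← Finset.sum_add_distrib]
  refine Finset.sum_congr rfl fun ω _ => ?_
  by_cases hd : d ∈ Set.range ω.2.1
  · have hω : ω ∉ {ω : Latent 𝒴 D Z | d ∉ Set.range ω.2.1} := not_not.2 hd
    simp only [replaceUntaken, if_pos hd, ProbMass.expect_const, Set.indicator_of_notMem hω,
      zero_mul, add_zero]
  · have hω : ω ∈ {ω : Latent 𝒴 D Z | d ∉ Set.range ω.2.1} := hd
    simp only [replaceUntaken, if_neg hd, Set.indicator_of_mem hω, mul_zero, zero_add]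

theorem theta_resampleUntaken_of_maxEnc {d : D} {z : Z} (h : MaxEnc Q d z) :
    theta (resampleUntaken Q R) d
      = expect Q (fun ω => if ω.2.1 z = d then (ω.1 d : ℝ) else 0)
        + pr Q {ω | ω.2.1 z ≠ d} * expect R (fun y => (y d : ℝ)) := by
  have hiff : ∀ ω ∉ {ω : Latent 𝒴 D Z | ω.2.1 z ≠ d ∧ ∃ z', ω.2.1 z' = d},
      d ∈ Set.range ω.2.1 ↔ ω.2.1 z = d := fun ω hω =>
    ⟨fun hd => not_not.1 fun hz => hω ⟨hz, hd⟩, fun hz => ⟨z, hz⟩⟩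
  rw [theta_resampleUntaken,
    ProbMass.expect_congr_of_pr_eq_zero h (g := fun ω => if ω.2.1 z = d then (ω.1 d : ℝ) else 0)
      fun ω hω => by simp only [hiff ω hω],
    ProbMass.pr_congr_of_pr_eq_zero h (S := {ω | d ∉ Set.range ω.2.1}) (T := {ω | ω.2.1 z ≠ d})
      fun ω hω => (hiff ω hω).not]

end Resampling

theorem theta_resampleUntaken_eq {Q Q' : ProbMass (Latent 𝒴 D Z)} {P : ProbMass (Obs 𝒴 D Z)}
    {R : ProbMass (D → 𝒴)} {d : D} {z : Z} (hE : Exog Q) (hMaxEnc : MaxEnc Q d z)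
    (hR : Rationalizes Q P) (hR' : Rationalizes Q' P) (hMI : MeanIndep Q') (hP : 0 < prZ P z)
    (hmean : pr Q' {ω | ω.2.2 = z ∧ ω.2.1 z ≠ d} * expect R (fun y => (y d : ℝ))
      = expect Q' ({ω | ω.2.2 = z ∧ ω.2.1 z ≠ d}.indicator fun ω => (ω.1 d : ℝ))) :
    theta (resampleUntaken Q R) d = theta Q' d := by
  have hsplit : expect Q' (fun ω => if ω.2.2 = z then (ω.1 d : ℝ) else 0)
      = expect Q' (fun ω => if ω.2.2 = z ∧ ω.2.1 z = d then (ω.1 d : ℝ) else 0)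
        + expect Q' ({ω | ω.2.2 = z ∧ ω.2.1 z ≠ d}.indicator fun ω => (ω.1 d : ℝ)) := by
    rw [← ProbMass.expect_add]
    congr 1
    funext ω
    by_cases hz : ω.2.2 = z <;> by_cases hd : ω.2.1 z = d <;> simp [hz, hd]
  refine mul_right_cancel₀ hP.ne' ?_
  calc theta (resampleUntaken Q R) d * prZ P z
      = (expect Q (fun ω => if ω.2.1 z = d then (ω.1 d : ℝ) else 0)
          + pr Q {ω | ω.2.1 z ≠ d} * expect R (fun y => (y d : ℝ))) * prZ P z := by
        rw [theta_resampleUntaken_of_maxEnc R hMaxEnc]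
    _ = expect Q (fun ω => if ω.2.2 = z ∧ ω.2.1 z = d then (ω.1 d : ℝ) else 0)
          + pr Q {ω | ω.2.2 = z ∧ ω.2.1 z ≠ d} * expect R (fun y => (y d : ℝ)) := by
        rw [hE.pr_and (fun _ dz => dz z ≠ d), hR.pr_instrument]
        simp only [ite_and]
        rw [hE.expect_ite (fun yd dz => if dz z = d then (yd d : ℝ) else 0), hR.pr_instrument]
        ring
    _ = expect Q' (fun ω => if ω.2.2 = z ∧ ω.2.1 z = d then (ω.1 d : ℝ) else 0)
          + pr Q' {ω | ω.2.2 = z ∧ ω.2.1 z ≠ d} * expect R (fun y => (y d : ℝ)) := by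
        rw [hR.expect_ite_takes, hR'.expect_ite_takes, hR.pr_not_takes, hR'.pr_not_takes]
    _ = theta Q' d * prZ P z := by
        rw [hmean, ← hsplit, ← hR'.pr_instrument,
          hMI.theta_mul_pr (hR'.pr_instrument z ▸ hP)]

theorem theta_mem_Theta0_of_meanIndep {QQ : Set (ProbMass (Latent 𝒴 D Z))}
    {P : ProbMass (Obs 𝒴 D Z)} (hsub : ∀ Q ∈ QQ, Exog Q ∧ GenMono Q) (hU : UnrestrictedPO QQ)
    (hP : ∀ z : Z, 0 < prZ P z) (hne : (Q0 P QQ).Nonempty) {Q' : ProbMass (Latent 𝒴 D Z)}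
    (hQ' : Q' ∈ Q0 P {Q | MeanIndep Q}) : theta Q' ∈ Theta0 P QQ := by
  obtain ⟨Q, hQ, hR⟩ := hne
  obtain ⟨hE, hM⟩ := hsub Q hQ
  choose z hz using hM
  let E : D → Set (Latent 𝒴 D Z) := fun d => {ω | ω.2.2 = z d ∧ ω.2.1 (z d) ≠ d}
  let R : ProbMass (D → 𝒴) := ProbMass.pi fun d => (Q'.cond (E d)).map fun ω => ω.1 d
  refine ⟨resampleUntaken Q R, ⟨hU Q hQ _ (hE.resampleUntaken R) fun dz =>
      pr_resampleUntaken_of_invariant Q R fun _ _ => Iff.rfl, hR.resampleUntaken R⟩, ?_⟩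
  funext d
  refine theta_resampleUntaken_eq hE (hz d) hR hQ'.2 hQ'.1 (hP (z d)) ?_
  rw [ProbMass.expect_pi_apply _ d (fun y : 𝒴 => (y : ℝ)), ProbMass.expect_map,
    ProbMass.pr_mul_expect_cond]

theorem sandwich_general
    (𝒴 : Finset ℝ)
    (D Z : Type) [Fintype D] [DecidableEq D]
    [Fintype Z] [DecidableEq Z]
    (QQ QQ' : Set (ProbMass (Latent 𝒴 D Z)))
    (hsub : ∀ Q ∈ QQ, Exog Q ∧ GenMono Q)
    (hU : UnrestrictedPO QQ)
    (hsub1 : QQ ⊆ QQ')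
    (hsub2 : QQ' ⊆ {Q : ProbMass (Latent 𝒴 D Z) | MeanIndep Q})
    (P : ProbMass (Obs 𝒴 D Z))
    (hP : ∀ z : Z, 0 < prZ P z)
    (hne : (Q0 P QQ).Nonempty) :
    Theta0 P QQ = Theta0 P QQ' ∧
      Theta0 P QQ' = Theta0 P {Q : ProbMass (Latent 𝒴 D Z) | MeanIndep Q} := by
  have h₁ : Theta0 P QQ ⊆ Theta0 P QQ' :=
    Set.image_mono fun Q hQ => ⟨hsub1 hQ.1, hQ.2⟩
  have h₂ : Theta0 P QQ' ⊆ Theta0 P {Q | MeanIndep Q} :=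
    Set.image_mono fun Q hQ => ⟨hsub2 hQ.1, hQ.2⟩
  have h₃ : Theta0 P {Q | MeanIndep Q} ⊆ Theta0 P QQ := by
    rintro _ ⟨Q', hQ', rfl⟩
    exact theta_mem_Theta0_of_meanIndep hsub hU hP hne hQ'
  exact ⟨h₁.antisymm (h₂.trans h₃), h₂.antisymm (h₃.trans h₁)⟩

/-- Theorem 3.3, sandwich: if `𝐐 ⊆ 𝐐*_{E,M}` does not restrict potential
outcomes and `𝐐 ⊆ 𝐐' ⊆ 𝐐*_{MI}`, then for any `P` consistent with `𝐐`,
`Θ₀(P, 𝐐) = Θ₀(P, 𝐐') = Θ₀(P, 𝐐*_{MI})`. -/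
theorem sandwich
    (𝒴 : Finset ℝ) (h𝒴 : 2 ≤ 𝒴.card)
    (D Z : Type) [Fintype D] [DecidableEq D] [Nontrivial D]
    [Fintype Z] [DecidableEq Z] [Nontrivial Z]
    (QQ QQ' : Set (ProbMass (Latent 𝒴 D Z)))
    (hsub : ∀ Q ∈ QQ, Exog Q ∧ GenMono Q)
    (hU : UnrestrictedPO QQ)
    (hsub1 : QQ ⊆ QQ')
    (hsub2 : QQ' ⊆ {Q : ProbMass (Latent 𝒴 D Z) | MeanIndep Q})
    (P : ProbMass (Obs 𝒴 D Z))
    (hP : ∀ z : Z, 0 < prZ P z)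
    (hne : (Q0 P QQ).Nonempty) :
    Theta0 P QQ = Theta0 P QQ' ∧
      Theta0 P QQ' = Theta0 P {Q : ProbMass (Latent 𝒴 D Z) | MeanIndep Q} :=
  sandwich_general 𝒴 D Z QQ QQ' hsub hU hsub1 hsub2 P hP hne
end

section
/- For any observed distribution P with P{Z = z} > 0 for all z ∈ 𝒵 such that 𝐐₀(P, 𝐐*_{E,M}) ≠ ∅, one has Θ₀(P, 𝐐*_{E,M}) = Θ₀(P, 𝐐*_E); that is, adding generalized monotonicity to instrument exogeneity does not change the identified set for the vector of average potential outcomes whenever these assumptions are consistent with P. -/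
open Finset

variable {𝒴 : Finset ℝ} {D Z : Type} [Fintype D] [DecidableEq D] [Fintype Z] [DecidableEq Z]

section Helpers
open scoped Classical

variable {α β : Type} [Fintype α] [Fintype β]

lemma pr_def (Q : ProbMass α) (p : α → Prop) :
    pr Q {a | p a} = ∑ a, if p a then Q.mass a else 0 := by
  unfold pr
  refine Finset.sum_congr rfl fun a _ => ?_
  by_cases h : p a
  · rw [Set.indicator_of_mem (show a ∈ {a | p a} from h), if_pos h]
  · rw [Set.indicator_of_notMem (show a ∉ {a | p a} from h), if_neg h]

lemma pr_nonneg (Q : ProbMass α) (p : α → Prop) : 0 ≤ pr Q {a | p a} := by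
  rw [pr_def]
  refine Finset.sum_nonneg fun a _ => ?_
  split_ifs
  · exact Q.nonneg a
  · exact le_refl 0

lemma pr_congr (Q : ProbMass α) {p q : α → Prop} (h : ∀ a, p a ↔ q a) :
    pr Q {a | p a} = pr Q {a | q a} := by
  congr 1; ext a; exact h a

lemma pr_mono (Q : ProbMass α) {p q : α → Prop} (h : ∀ a, p a → q a) :
    pr Q {a | p a} ≤ pr Q {a | q a} := by
  rw [pr_def, pr_def]
  refine Finset.sum_le_sum fun a _ => ?_
  by_cases hp : p a
  · rw [if_pos hp, if_pos (h a hp)]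
  · rw [if_neg hp]
    split_ifs
    · exact Q.nonneg a
    · exact le_refl 0

lemma pr_eq_zero (Q : ProbMass α) {p q : α → Prop} (hq : pr Q {a | q a} = 0)
    (h : ∀ a, p a → q a) : pr Q {a | p a} = 0 :=
  le_antisymm (hq ▸ pr_mono Q h) (pr_nonneg Q p)

lemma pr_split (Q : ProbMass α) (p q : α → Prop) :
    pr Q {a | p a} = pr Q {a | p a ∧ q a} + pr Q {a | p a ∧ ¬ q a} := by
  rw [pr_def, pr_def, pr_def, ← Finset.sum_add_distrib]
  refine Finset.sum_congr rfl fun a _ => ?_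
  by_cases hp : p a <;> by_cases hq : q a <;> simp [hp, hq]

lemma pr_univ (Q : ProbMass α) : pr Q {a | True} = 1 := by
  rw [pr_def]; simpa using Q.total

lemma pr_fiber (Q : ProbMass α) (s : α → β) (p : α → Prop) (φ : β → Prop) :
    pr Q {a | p a ∧ φ (s a)} = ∑ b, if φ b then pr Q {a | p a ∧ s a = b} else 0 := by
  rw [pr_def]
  have : ∀ b : β, (if φ b then pr Q {a | p a ∧ s a = b} else 0)
      = ∑ a, if p a ∧ s a = b ∧ φ b then Q.mass a else 0 := by
    intro b
    by_cases hb : φ b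
    · rw [if_pos hb, pr_def]
      exact Finset.sum_congr rfl fun a _ => by simp [hb, and_assoc]
    · rw [if_neg hb]
      rw [eq_comm]
      refine Finset.sum_eq_zero fun a _ => by simp [hb]
  rw [Finset.sum_congr rfl fun b _ => this b, Finset.sum_comm]
  refine Finset.sum_congr rfl fun a _ => ?_
  by_cases hp : p a
  · simp [hp, ite_and, Finset.sum_ite_eq]
  · simp [hp]

lemma pr_fiber' (Q : ProbMass α) (s : α → β) (p : α → Prop) :
    pr Q {a | p a} = ∑ b, pr Q {a | p a ∧ s a = b} := by
  have h := pr_fiber Q s p (fun _ => True)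
  simp only [and_true, if_true] at h
  exact h

lemma expect_fiber (Q : ProbMass α) (s : α → β) (h : β → ℝ) :
    expect Q (fun a => h (s a)) = ∑ b, pr Q {a | s a = b} * h b := by
  show (∑ a, Q.mass a * h (s a)) = _
  rw [eq_comm]
  have key : ∀ b, pr Q {a | s a = b} * h b = ∑ a, if s a = b then Q.mass a * h b else 0 := by
    intro b; rw [pr_def, Finset.sum_mul]
    exact Finset.sum_congr rfl fun a _ => by split_ifs <;> simp
  rw [Finset.sum_congr rfl fun b _ => key b, Finset.sum_comm]
  exact Finset.sum_congr rfl fun a _ => by simp [Finset.sum_ite_eq]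

lemma pr_singleton (Q : ProbMass α) (x : α) : pr Q {a | a = x} = Q.mass x := by
  rw [pr_def]; simp [Finset.sum_ite_eq']

end Helpers

section Helpers2
open scoped Classical

lemma rat_pr {Q : ProbMass (Latent 𝒴 D Z)} {P : ProbMass (Obs 𝒴 D Z)}
    (hQ : Rationalizes Q P) (p : Obs 𝒴 D Z → Prop) :
    pr P {o | p o} = pr Q {ω | p (Tmap ω)} := by
  rw [pr_def, pr_def]
  have key : ∀ o, (if p o then P.mass o else 0)
      = ∑ ω, if Tmap ω = o ∧ p o then Q.mass ω else 0 := by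
    intro o
    by_cases hp : p o
    · rw [if_pos hp, hQ o, pr_def]
      exact Finset.sum_congr rfl fun ω _ => by simp [hp]
    · rw [if_neg hp, eq_comm]
      exact Finset.sum_eq_zero fun ω _ => by simp [hp]
  rw [Finset.sum_congr rfl fun o _ => key o, Finset.sum_comm]
  exact Finset.sum_congr rfl fun ω _ => by simp [ite_and, Finset.sum_ite_eq]

lemma exog_atom {Q : ProbMass (Latent 𝒴 D Z)} (hQ : Exog Q) (yd : D → ↥𝒴) (dz : Z → D) (z : Z) :
    Q.mass (yd, dz, z) = (∑ z', Q.mass (yd, dz, z')) * pr Q {ω | ω.2.2 = z} := by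
  have h1 : ∀ z₀ : Z, pr Q {ω : Latent 𝒴 D Z | ω.1 = yd ∧ ω.2.1 = dz ∧ ω.2.2 = z₀}
      = Q.mass (yd, dz, z₀) := by
    intro z₀
    rw [← pr_singleton Q (yd, dz, z₀)]
    refine pr_congr Q fun ω => ?_
    constructor
    · rintro ⟨ha, hb, hc⟩
      exact Prod.ext ha (Prod.ext hb hc)
    · rintro rfl; exact ⟨rfl, rfl, rfl⟩
  have h2 : pr Q {ω : Latent 𝒴 D Z | ω.1 = yd ∧ ω.2.1 = dz} = ∑ z', Q.mass (yd, dz, z') := by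
    rw [pr_fiber' Q (fun ω => ω.2.2) (fun ω => ω.1 = yd ∧ ω.2.1 = dz)]
    refine Finset.sum_congr rfl fun z' _ => ?_
    rw [← h1 z']
    exact pr_congr Q fun ω => by tauto
  rw [← h1 z, hQ yd dz z, h2]

lemma exog_event {Q : ProbMass (Latent 𝒴 D Z)} (hQ : Exog Q)
    (φ : (D → ↥𝒴) → (Z → D) → Prop) (z : Z) :
    pr Q {ω | φ ω.1 ω.2.1 ∧ ω.2.2 = z}
      = pr Q {ω | φ ω.1 ω.2.1} * pr Q {ω | ω.2.2 = z} := by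
  rw [pr_def, pr_def]
  simp only [Fintype.sum_prod_type]
  rw [Finset.sum_mul]
  refine Finset.sum_congr rfl fun yd _ => ?_
  rw [Finset.sum_mul]
  refine Finset.sum_congr rfl fun dz _ => ?_
  by_cases hφ : φ yd dz
  · simp only [hφ, true_and, if_true, Finset.sum_ite_eq', Finset.mem_univ]
    exact exog_atom hQ yd dz z
  · simp [hφ]

end Helpers2
section Construction
open scoped Classical

/-- Fallback distribution for `Y_d` on never-takers of `d`. -/
noncomputable def lam (Q : ProbMass (Latent 𝒴 D Z)) (zs : D → Z) (y0 : ↥𝒴)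
    (d : D) (y : ↥𝒴) : ℝ :=
  if pr Q {ω | ω.2.1 (zs d) ≠ d} = 0 then (if y = y0 then 1 else 0)
  else pr Q {ω | ω.1 d = y ∧ ω.2.1 (zs d) ≠ d} / pr Q {ω | ω.2.1 (zs d) ≠ d}

/-- Conditional distribution of `Y_d` given the vector of potential treatments. -/
noncomputable def nud (QM Q : ProbMass (Latent 𝒴 D Z)) (zs : D → Z) (y0 : ↥𝒴)
    (d : D) (dz : Z → D) (y : ↥𝒴) : ℝ :=
  if (∃ z', dz z' = d) ∧ pr QM {ω | ω.2.1 = dz} ≠ 0 then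
    pr QM {ω | ω.1 d = y ∧ ω.2.1 = dz} / pr QM {ω | ω.2.1 = dz}
  else lam Q zs y0 d y

lemma sum_pr_fiber {α β : Type} [Fintype α] [Fintype β] (Q : ProbMass α) (s : α → β)
    (p : α → Prop) : ∑ b, pr Q {a | s a = b ∧ p a} = pr Q {a | p a} := by
  rw [pr_fiber' Q s p]
  exact Finset.sum_congr rfl fun b _ => pr_congr Q fun a => by tauto

lemma nud_nonneg (QM Q : ProbMass (Latent 𝒴 D Z)) (zs : D → Z) (y0 : ↥𝒴)
    (d : D) (dz : Z → D) (y : ↥𝒴) : 0 ≤ nud QM Q zs y0 d dz y := by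
  unfold nud lam
  split_ifs with h1 h2 h3
  · exact div_nonneg (pr_nonneg _ _) (pr_nonneg _ _)
  · exact zero_le_one
  · exact le_refl 0
  · exact div_nonneg (pr_nonneg _ _) (pr_nonneg _ _)

lemma lam_sum_one (Q : ProbMass (Latent 𝒴 D Z)) (zs : D → Z) (y0 : ↥𝒴) (d : D) :
    ∑ y, lam Q zs y0 d y = 1 := by
  unfold lam
  split_ifs with h2
  · simp [Finset.sum_ite_eq']
  · rw [← Finset.sum_div]
    rw [sum_pr_fiber Q (fun ω => ω.1 d) (fun ω => ω.2.1 (zs d) ≠ d)]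
    exact div_self h2

lemma nud_sum_one (QM Q : ProbMass (Latent 𝒴 D Z)) (zs : D → Z) (y0 : ↥𝒴)
    (d : D) (dz : Z → D) : ∑ y, nud QM Q zs y0 d dz y = 1 := by
  unfold nud
  split_ifs with h1
  · rw [← Finset.sum_div]
    rw [sum_pr_fiber QM (fun ω => ω.1 d) (fun ω => ω.2.1 = dz)]
    exact div_self h1.2
  · exact lam_sum_one Q zs y0 d

lemma nud_key (QM Q : ProbMass (Latent 𝒴 D Z)) (zs : D → Z) (y0 : ↥𝒴)
    (d : D) (dz : Z → D) (y : ↥𝒴) (hdz : ∃ z', dz z' = d) :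
    pr QM {ω | ω.2.1 = dz} * nud QM Q zs y0 d dz y
      = pr QM {ω | ω.1 d = y ∧ ω.2.1 = dz} := by
  by_cases hμ : pr QM {ω | ω.2.1 = dz} = 0
  · rw [hμ, zero_mul, eq_comm]
    exact le_antisymm (hμ ▸ pr_mono QM fun ω h => h.2) (pr_nonneg _ _)
  · unfold nud
    rw [if_pos ⟨hdz, hμ⟩, mul_comm, div_mul_cancel₀ _ hμ]

lemma sum_prod_weight (ν : D → ↥𝒴 → ℝ) (hν : ∀ d', ∑ y, ν d' y = 1) (d : D) (h : ↥𝒴 → ℝ) :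
    ∑ yd : D → ↥𝒴, (∏ d', ν d' (yd d')) * h (yd d) = ∑ y, ν d y * h y := by
  have key : ∀ yd : D → ↥𝒴, (∏ d', ν d' (yd d')) * h (yd d)
      = ∏ d', (if d' = d then ν d (yd d') * h (yd d') else ν d' (yd d')) := by
    intro yd
    have hrhs : (∏ d', (if d' = d then ν d (yd d') * h (yd d') else ν d' (yd d')))
        = (ν d (yd d) * h (yd d)) * ∏ d' ∈ Finset.univ.erase d, ν d' (yd d') := by
      rw [← Finset.mul_prod_erase Finset.univ _ (Finset.mem_univ d), if_pos rfl]
      exact congrArg _ (Finset.prod_congr rfl fun d' hd' => if_neg (Finset.mem_erase.mp hd').1)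
    have hlhs : (∏ d', ν d' (yd d'))
        = ν d (yd d) * ∏ d' ∈ Finset.univ.erase d, ν d' (yd d') :=
      (Finset.mul_prod_erase Finset.univ _ (Finset.mem_univ d)).symm
    rw [hrhs, hlhs]; ring
  rw [Finset.sum_congr rfl fun yd _ => key yd]
  have hps := Fintype.prod_sum (fun d' (y : ↥𝒴) => if d' = d then ν d y * h y else ν d' y)
  rw [← hps, ← Finset.mul_prod_erase Finset.univ _ (Finset.mem_univ d)]
  have h1 : (∑ j : ↥𝒴, if d = d then ν d j * h j else ν d j) = ∑ y, ν d y * h y :=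
    Finset.sum_congr rfl fun y _ => if_pos rfl
  have h2 : ∀ d' ∈ Finset.univ.erase d,
      (∑ j : ↥𝒴, if d' = d then ν d j * h j else ν d' j) = 1 := by
    intro d' hd'
    rw [Finset.sum_congr rfl fun y _ => if_neg (Finset.mem_erase.mp hd').1, hν d']
  rw [h1, Finset.prod_congr rfl h2, Finset.prod_const_one, mul_one]

lemma sum_prod_one (ν : D → ↥𝒴 → ℝ) (hν : ∀ d', ∑ y, ν d' y = 1) :
    ∑ yd : D → ↥𝒴, (∏ d', ν d' (yd d')) = 1 := by
  rw [← Fintype.prod_sum ν]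
  rw [Finset.prod_congr rfl fun d' _ => hν d', Finset.prod_const_one]

lemma pr_atom (Q : ProbMass (Latent 𝒴 D Z)) (yd : D → ↥𝒴) (dz : Z → D) (z : Z) :
    pr Q {ω | ω.1 = yd ∧ ω.2.1 = dz ∧ ω.2.2 = z} = Q.mass (yd, dz, z) := by
  rw [← pr_singleton Q (yd, dz, z)]
  refine pr_congr Q fun ω => ?_
  constructor
  · rintro ⟨ha, hb, hc⟩
    exact Prod.ext ha (Prod.ext hb hc)
  · rintro rfl; exact ⟨rfl, rfl, rfl⟩

lemma pr_fiber_pred {α β : Type} [Fintype α] [Fintype β] (Q : ProbMass α) (s : α → β)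
    (φ : β → Prop) :
    pr Q {a | φ (s a)} = ∑ b, if φ b then pr Q {a | s a = b} else 0 := by
  have h := pr_fiber Q s (fun _ => True) φ
  simp only [true_and] at h
  exact h

lemma sum_pr_eq_one {α β : Type} [Fintype α] [Fintype β] (Q : ProbMass α) (s : α → β) :
    ∑ b, pr Q {a | s a = b} = 1 := by
  rw [← pr_univ Q, pr_fiber' Q s (fun _ => True)]
  exact Finset.sum_congr rfl fun b _ => pr_congr Q fun a => by tauto

/-- The constructed latent distribution. -/
noncomputable def QC (QM Q : ProbMass (Latent 𝒴 D Z)) (zs : D → Z) (y0 : ↥𝒴) :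
    ProbMass (Latent 𝒴 D Z) where
  mass ω := pr QM {ω' | ω'.2.2 = ω.2.2} *
    (pr QM {ω' | ω'.2.1 = ω.2.1} * ∏ d, nud QM Q zs y0 d ω.2.1 (ω.1 d))
  nonneg ω := mul_nonneg (pr_nonneg _ _) (mul_nonneg (pr_nonneg _ _)
    (Finset.prod_nonneg fun d _ => nud_nonneg _ _ _ _ _ _ _))
  total := by
    simp only [Fintype.sum_prod_type]
    have step1 : ∀ (yd : D → ↥𝒴) (dz : Z → D),
        (∑ z, pr QM {ω' : Latent 𝒴 D Z | ω'.2.2 = z} *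
          (pr QM {ω' : Latent 𝒴 D Z | ω'.2.1 = dz} * ∏ d, nud QM Q zs y0 d dz (yd d)))
        = pr QM {ω' : Latent 𝒴 D Z | ω'.2.1 = dz} * ∏ d, nud QM Q zs y0 d dz (yd d) := by
      intro yd dz
      rw [← Finset.sum_mul, sum_pr_eq_one QM (fun ω => ω.2.2), one_mul]
    rw [Finset.sum_congr rfl fun yd _ => Finset.sum_congr rfl fun dz _ => step1 yd dz,
      Finset.sum_comm]
    have step2 : ∀ dz : Z → D,
        (∑ yd : D → ↥𝒴, pr QM {ω' : Latent 𝒴 D Z | ω'.2.1 = dz}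
          * ∏ d, nud QM Q zs y0 d dz (yd d))
        = pr QM {ω' : Latent 𝒴 D Z | ω'.2.1 = dz} := by
      intro dz
      rw [← Finset.mul_sum, sum_prod_one _ (fun d' => nud_sum_one QM Q zs y0 d' dz), mul_one]
    rw [Finset.sum_congr rfl fun dz _ => step2 dz, sum_pr_eq_one QM (fun ω => ω.2.1)]
lemma pr_pair (Q : ProbMass (Latent 𝒴 D Z)) (yd : D → ↥𝒴) (dz : Z → D) :
    pr Q {ω | ω.1 = yd ∧ ω.2.1 = dz} = ∑ z', Q.mass (yd, dz, z') := by
  rw [pr_fiber' Q (fun ω => ω.2.2) (fun ω => ω.1 = yd ∧ ω.2.1 = dz)]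
  refine Finset.sum_congr rfl fun z' _ => ?_
  rw [← pr_atom Q yd dz z']
  exact pr_congr Q fun ω => by tauto

lemma pr_cond_z (Q : ProbMass (Latent 𝒴 D Z)) (p : (D → ↥𝒴) → (Z → D) → Prop) (z : Z) :
    pr Q {ω | p ω.1 ω.2.1 ∧ ω.2.2 = z}
      = ∑ yd, ∑ dz, if p yd dz then Q.mass (yd, dz, z) else 0 := by
  rw [pr_def]
  simp only [Fintype.sum_prod_type]
  refine Finset.sum_congr rfl fun yd _ => Finset.sum_congr rfl fun dz _ => ?_
  by_cases hp : p yd dz <;> simp [hp, Finset.sum_ite_eq']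

lemma pr_D_mass (Q : ProbMass (Latent 𝒴 D Z)) (dz : Z → D) :
    pr Q {ω | ω.2.1 = dz} = ∑ yd : D → ↥𝒴, ∑ z : Z, Q.mass (yd, dz, z) := by
  rw [pr_fiber' Q (fun ω => ω.1) (fun ω => ω.2.1 = dz)]
  refine Finset.sum_congr rfl fun yd _ => ?_
  rw [← pr_pair Q yd dz]
  exact pr_congr Q fun ω => by tauto

lemma pr_Z_mass (Q : ProbMass (Latent 𝒴 D Z)) (z : Z) :
    pr Q {ω | ω.2.2 = z} = ∑ yd : D → ↥𝒴, ∑ dz : Z → D, Q.mass (yd, dz, z) := by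
  have h := pr_cond_z Q (fun _ _ => True) z
  simp only [true_and, if_true] at h
  exact h

lemma QC_mu (QM Q : ProbMass (Latent 𝒴 D Z)) (zs : D → Z) (y0 : ↥𝒴) (dz : Z → D) :
    pr (QC QM Q zs y0) {ω | ω.2.1 = dz} = pr QM {ω | ω.2.1 = dz} := by
  rw [pr_D_mass]
  show (∑ yd : D → ↥𝒴, ∑ z : Z, pr QM {ω' : Latent 𝒴 D Z | ω'.2.2 = z} *
    (pr QM {ω' : Latent 𝒴 D Z | ω'.2.1 = dz} * ∏ d, nud QM Q zs y0 d dz (yd d))) = _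
  have h1 : ∀ yd : D → ↥𝒴, (∑ z : Z, pr QM {ω' : Latent 𝒴 D Z | ω'.2.2 = z} *
      (pr QM {ω' : Latent 𝒴 D Z | ω'.2.1 = dz} * ∏ d, nud QM Q zs y0 d dz (yd d)))
      = pr QM {ω' : Latent 𝒴 D Z | ω'.2.1 = dz} * ∏ d, nud QM Q zs y0 d dz (yd d) := by
    intro yd
    rw [← Finset.sum_mul, sum_pr_eq_one QM (fun ω => ω.2.2), one_mul]
  rw [Finset.sum_congr rfl fun yd _ => h1 yd, ← Finset.mul_sum,
    sum_prod_one _ (fun d' => nud_sum_one QM Q zs y0 d' dz), mul_one]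

lemma QC_Z (QM Q : ProbMass (Latent 𝒴 D Z)) (zs : D → Z) (y0 : ↥𝒴) (z : Z) :
    pr (QC QM Q zs y0) {ω | ω.2.2 = z} = pr QM {ω | ω.2.2 = z} := by
  rw [pr_Z_mass]
  show (∑ yd : D → ↥𝒴, ∑ dz : Z → D, pr QM {ω' : Latent 𝒴 D Z | ω'.2.2 = z} *
    (pr QM {ω' : Latent 𝒴 D Z | ω'.2.1 = dz} * ∏ d, nud QM Q zs y0 d dz (yd d))) = _
  rw [Finset.sum_comm]
  have h1 : ∀ dz : Z → D, (∑ yd : D → ↥𝒴, pr QM {ω' : Latent 𝒴 D Z | ω'.2.2 = z} *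
      (pr QM {ω' : Latent 𝒴 D Z | ω'.2.1 = dz} * ∏ d, nud QM Q zs y0 d dz (yd d)))
      = pr QM {ω' : Latent 𝒴 D Z | ω'.2.2 = z} * pr QM {ω' : Latent 𝒴 D Z | ω'.2.1 = dz} := by
    intro dz
    rw [← Finset.mul_sum, ← Finset.mul_sum,
      sum_prod_one _ (fun d' => nud_sum_one QM Q zs y0 d' dz), mul_one]
  rw [Finset.sum_congr rfl fun dz _ => h1 dz, ← Finset.mul_sum,
    sum_pr_eq_one QM (fun ω => ω.2.1), mul_one]

lemma QC_exog (QM Q : ProbMass (Latent 𝒴 D Z)) (zs : D → Z) (y0 : ↥𝒴) :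
    Exog (QC QM Q zs y0) := by
  intro yd dz z
  rw [pr_atom, pr_pair, QC_Z]
  show pr QM {ω' : Latent 𝒴 D Z | ω'.2.2 = z} *
      (pr QM {ω' : Latent 𝒴 D Z | ω'.2.1 = dz} * ∏ d, nud QM Q zs y0 d dz (yd d)) = _
  have h1 : (∑ z' : Z, (QC QM Q zs y0).mass (yd, dz, z'))
      = pr QM {ω' : Latent 𝒴 D Z | ω'.2.1 = dz} * ∏ d, nud QM Q zs y0 d dz (yd d) := by
    show (∑ z' : Z, pr QM {ω' : Latent 𝒴 D Z | ω'.2.2 = z'} *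
      (pr QM {ω' : Latent 𝒴 D Z | ω'.2.1 = dz} * ∏ d, nud QM Q zs y0 d dz (yd d))) = _
    rw [← Finset.sum_mul, sum_pr_eq_one QM (fun ω => ω.2.2), one_mul]
  rw [h1]; ring

lemma QC_marg (QM Q : ProbMass (Latent 𝒴 D Z)) (zs : D → Z) (y0 : ↥𝒴)
    (φ : (Z → D) → Prop) :
    pr (QC QM Q zs y0) {ω | φ ω.2.1} = pr QM {ω | φ ω.2.1} := by
  rw [pr_fiber_pred (QC QM Q zs y0) (fun ω => ω.2.1) φ,
    pr_fiber_pred QM (fun ω => ω.2.1) φ]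
  refine Finset.sum_congr rfl fun dz _ => ?_
  by_cases hφ : φ dz
  · rw [if_pos hφ, if_pos hφ, QC_mu]
  · rw [if_neg hφ, if_neg hφ]
lemma QC_local (QM Q : ProbMass (Latent 𝒴 D Z)) (zs : D → Z) (y0 : ↥𝒴)
    (y : ↥𝒴) (d : D) (dz : Z → D) (z : Z) :
    pr (QC QM Q zs y0) {ω | (ω.2.1 = dz ∧ ω.2.2 = z) ∧ ω.1 d = y}
      = pr QM {ω | ω.2.2 = z} * (pr QM {ω | ω.2.1 = dz} * nud QM Q zs y0 d dz y) := by
  rw [pr_fiber (QC QM Q zs y0) (fun ω => ω.1) (fun ω => ω.2.1 = dz ∧ ω.2.2 = z)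
    (fun yd => yd d = y)]
  trans (∑ yd : D → ↥𝒴, (∏ d', nud QM Q zs y0 d' dz (yd d')) *
      (if yd d = y then pr QM {ω : Latent 𝒴 D Z | ω.2.2 = z} *
        pr QM {ω : Latent 𝒴 D Z | ω.2.1 = dz} else 0))
  · refine Finset.sum_congr rfl fun yd _ => ?_
    by_cases h : yd d = y
    · rw [if_pos h, if_pos h]
      have hm : pr (QC QM Q zs y0) {ω | (ω.2.1 = dz ∧ ω.2.2 = z) ∧ ω.1 = yd}
          = (QC QM Q zs y0).mass (yd, dz, z) := by
        rw [← pr_atom (QC QM Q zs y0) yd dz z]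
        exact pr_congr _ fun ω => by tauto
      rw [hm]
      show pr QM {ω : Latent 𝒴 D Z | ω.2.2 = z} * (pr QM {ω : Latent 𝒴 D Z | ω.2.1 = dz} *
        ∏ d', nud QM Q zs y0 d' dz (yd d')) = _
      ring
    · rw [if_neg h, if_neg h, mul_zero]
  · refine Eq.trans (sum_prod_weight (fun d' => nud QM Q zs y0 d' dz)
      (fun d' => nud_sum_one QM Q zs y0 d' dz) d
      (fun y' => if y' = y then pr QM {ω : Latent 𝒴 D Z | ω.2.2 = z} *
        pr QM {ω : Latent 𝒴 D Z | ω.2.1 = dz} else 0)) ?_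
    have hpt : ∀ y' : ↥𝒴, nud QM Q zs y0 d dz y' *
        (if y' = y then pr QM {ω : Latent 𝒴 D Z | ω.2.2 = z} *
          pr QM {ω : Latent 𝒴 D Z | ω.2.1 = dz} else 0)
        = if y' = y then nud QM Q zs y0 d dz y' *
          (pr QM {ω : Latent 𝒴 D Z | ω.2.2 = z} *
            pr QM {ω : Latent 𝒴 D Z | ω.2.1 = dz}) else 0 := by
      intro y'; split_ifs <;> ring
    rw [Finset.sum_congr rfl fun y' _ => hpt y', Finset.sum_ite_eq' Finset.univ y]
    simp only [Finset.mem_univ, if_true]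
    ring

lemma Tmap_fiber (y : ↥𝒴) (d : D) (z : Z) (ω : Latent 𝒴 D Z) :
    Tmap ω = (y, d, z) ↔ ω.1 d = y ∧ ω.2.1 z = d ∧ ω.2.2 = z := by
  unfold Tmap
  rw [Prod.ext_iff, Prod.ext_iff]
  simp only
  constructor
  · rintro ⟨h1, h2, h3⟩
    subst h3; subst h2
    exact ⟨h1, rfl, rfl⟩
  · rintro ⟨h1, h2, h3⟩
    subst h3; subst h2
    exact ⟨h1, rfl, rfl⟩

lemma QC_fiber (QM Q : ProbMass (Latent 𝒴 D Z)) (zs : D → Z) (y0 : ↥𝒴)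
    (y : ↥𝒴) (d : D) (z : Z) :
    pr (QC QM Q zs y0) {ω | ω.1 d = y ∧ ω.2.1 z = d ∧ ω.2.2 = z}
      = pr QM {ω | ω.2.2 = z} * pr QM {ω | ω.1 d = y ∧ ω.2.1 z = d} := by
  have h0 : pr (QC QM Q zs y0) {ω | ω.1 d = y ∧ ω.2.1 z = d ∧ ω.2.2 = z}
      = pr (QC QM Q zs y0) {ω | (ω.1 d = y ∧ ω.2.2 = z) ∧ (fun dz => dz z = d) ω.2.1} :=
    pr_congr _ fun ω => by tauto
  rw [h0, pr_fiber (QC QM Q zs y0) (fun ω => ω.2.1) (fun ω => ω.1 d = y ∧ ω.2.2 = z)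
    (fun dz => dz z = d)]
  rw [pr_fiber QM (fun ω => ω.2.1) (fun ω => ω.1 d = y) (fun dz => dz z = d),
    Finset.mul_sum]
  refine Finset.sum_congr rfl fun dz _ => ?_
  by_cases hdz : dz z = d
  · rw [if_pos hdz, if_pos hdz]
    have h1 : pr (QC QM Q zs y0) {ω | (ω.1 d = y ∧ ω.2.2 = z) ∧ ω.2.1 = dz}
        = pr (QC QM Q zs y0) {ω | (ω.2.1 = dz ∧ ω.2.2 = z) ∧ ω.1 d = y} :=
      pr_congr _ fun ω => by tauto
    rw [h1, QC_local, ← nud_key QM Q zs y0 d dz y ⟨z, hdz⟩]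
  · rw [if_neg hdz, if_neg hdz, mul_zero]

lemma QC_rat (QM Q : ProbMass (Latent 𝒴 D Z)) (zs : D → Z) (y0 : ↥𝒴)
    (P : ProbMass (Obs 𝒴 D Z)) (hE : Exog QM) (hR : Rationalizes QM P) :
    Rationalizes (QC QM Q zs y0) P := by
  rintro ⟨y, d, z⟩
  rw [hR (y, d, z), pr_congr QM (Tmap_fiber y d z), pr_congr (QC QM Q zs y0) (Tmap_fiber y d z),
    QC_fiber]
  have hL : pr QM {ω | ω.1 d = y ∧ ω.2.1 z = d ∧ ω.2.2 = z}
      = pr QM {ω | ω.1 d = y ∧ ω.2.1 z = d} * pr QM {ω | ω.2.2 = z} := by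
    have h0 : pr QM {ω | ω.1 d = y ∧ ω.2.1 z = d ∧ ω.2.2 = z}
        = pr QM {ω | (ω.1 d = y ∧ ω.2.1 z = d) ∧ ω.2.2 = z} :=
      pr_congr _ fun ω => by tauto
    rw [h0]
    exact exog_event hE (fun yd dz => yd d = y ∧ dz z = d) z
  rw [hL]; ring
lemma QC_yd_dz (QM Q : ProbMass (Latent 𝒴 D Z)) (zs : D → Z) (y0 : ↥𝒴)
    (y : ↥𝒴) (d : D) (dz : Z → D) :
    pr (QC QM Q zs y0) {ω | ω.1 d = y ∧ ω.2.1 = dz}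
      = pr QM {ω | ω.2.1 = dz} * nud QM Q zs y0 d dz y := by
  rw [pr_fiber' (QC QM Q zs y0) (fun ω => ω.2.2) (fun ω => ω.1 d = y ∧ ω.2.1 = dz)]
  trans (∑ z : Z, pr QM {ω : Latent 𝒴 D Z | ω.2.2 = z} *
      (pr QM {ω : Latent 𝒴 D Z | ω.2.1 = dz} * nud QM Q zs y0 d dz y))
  · refine Finset.sum_congr rfl fun z _ => ?_
    rw [← QC_local QM Q zs y0 y d dz z]
    exact pr_congr _ fun ω => by tauto
  · rw [← Finset.sum_mul, sum_pr_eq_one QM (fun ω => ω.2.2), one_mul]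

lemma QC_split (QM Q : ProbMass (Latent 𝒴 D Z)) (zs : D → Z) (y0 : ↥𝒴)
    (y : ↥𝒴) (d : D) :
    pr (QC QM Q zs y0) {ω | ω.1 d = y}
      = pr QM {ω | ω.1 d = y ∧ ∃ z', ω.2.1 z' = d}
        + pr QM {ω | ¬ ∃ z', ω.2.1 z' = d} * lam Q zs y0 d y := by
  rw [pr_split (QC QM Q zs y0) (fun ω => ω.1 d = y) (fun ω => ∃ z', ω.2.1 z' = d)]
  congr 1
  · rw [pr_fiber (QC QM Q zs y0) (fun ω => ω.2.1) (fun ω => ω.1 d = y)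
      (fun dz => ∃ z', dz z' = d),
      pr_fiber QM (fun ω => ω.2.1) (fun ω => ω.1 d = y) (fun dz => ∃ z', dz z' = d)]
    refine Finset.sum_congr rfl fun dz _ => ?_
    by_cases hdz : ∃ z', dz z' = d
    · rw [if_pos hdz, if_pos hdz, QC_yd_dz, nud_key QM Q zs y0 d dz y hdz]
    · rw [if_neg hdz, if_neg hdz]
  · rw [pr_fiber (QC QM Q zs y0) (fun ω => ω.2.1) (fun ω => ω.1 d = y)
      (fun dz => ¬ ∃ z', dz z' = d),
      pr_fiber_pred QM (fun ω => ω.2.1) (fun dz => ¬ ∃ z', dz z' = d), Finset.sum_mul]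
    refine Finset.sum_congr rfl fun dz _ => ?_
    by_cases hdz : ¬ ∃ z', dz z' = d
    · rw [if_pos hdz, if_pos hdz, QC_yd_dz]
      have hnud : nud QM Q zs y0 d dz y = lam Q zs y0 d y := by
        unfold nud
        rw [if_neg]
        rintro ⟨h1, _⟩
        exact hdz h1
      rw [hnud]
    · rw [if_neg hdz, if_neg hdz, zero_mul]

lemma QC_theta (QM Q : ProbMass (Latent 𝒴 D Z)) (zs : D → Z) (y0 : ↥𝒴) (d : D) :
    theta (QC QM Q zs y0) d
      = (∑ y : ↥𝒴, pr QM {ω | ω.1 d = y ∧ ∃ z', ω.2.1 z' = d} * (y : ℝ))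
        + pr QM {ω | ¬ ∃ z', ω.2.1 z' = d} * (∑ y : ↥𝒴, lam Q zs y0 d y * (y : ℝ)) := by
  have ht : theta (QC QM Q zs y0) d
      = ∑ y : ↥𝒴, pr (QC QM Q zs y0) {ω | ω.1 d = y} * (y : ℝ) :=
    expect_fiber (QC QM Q zs y0) (fun ω => ω.1 d) (fun y => (y : ℝ))
  rw [ht]
  trans (∑ y : ↥𝒴, (pr QM {ω : Latent 𝒴 D Z | ω.1 d = y ∧ ∃ z', ω.2.1 z' = d} * (y : ℝ)
      + pr QM {ω : Latent 𝒴 D Z | ¬ ∃ z', ω.2.1 z' = d} * (lam Q zs y0 d y * (y : ℝ))))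
  · refine Finset.sum_congr rfl fun y _ => ?_
    rw [QC_split QM Q zs y0 y d, add_mul, mul_assoc]
  · rw [Finset.sum_add_distrib, ← Finset.mul_sum]
lemma pr_not {α : Type} [Fintype α] (Q : ProbMass α) (p : α → Prop) :
    pr Q {a | ¬ p a} = 1 - pr Q {a | p a} := by
  have hs := pr_split Q (fun _ => True) p
  rw [pr_univ] at hs
  have h1 : pr Q {a : α | True ∧ p a} = pr Q {a | p a} := pr_congr Q fun a => by tauto
  have h2 : pr Q {a : α | True ∧ ¬ p a} = pr Q {a | ¬ p a} := pr_congr Q fun a => by tauto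
  rw [h1, h2] at hs
  linarith

lemma transferY {Q : ProbMass (Latent 𝒴 D Z)} {P : ProbMass (Obs 𝒴 D Z)}
    (hE : Exog Q) (hR : Rationalizes Q P) (y : ↥𝒴) (d : D) (z : Z) :
    pr Q {ω | ω.1 d = y ∧ ω.2.1 z = d} * prZ P z
      = pr P {o | o.1 = y ∧ o.2.1 = d ∧ o.2.2 = z} := by
  have hZ : prZ P z = pr Q {ω | ω.2.2 = z} := rat_pr hR (fun o => o.2.2 = z)
  have h1 : pr P {o | o.1 = y ∧ o.2.1 = d ∧ o.2.2 = z}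
      = pr Q {ω | ω.1 d = y ∧ ω.2.1 z = d ∧ ω.2.2 = z} := by
    rw [rat_pr hR (fun o => o.1 = y ∧ o.2.1 = d ∧ o.2.2 = z)]
    refine pr_congr Q fun ω => ?_
    have hobs : ∀ o : Obs 𝒴 D Z, (o.1 = y ∧ o.2.1 = d ∧ o.2.2 = z) ↔ o = (y, d, z) :=
      fun o => ⟨fun ⟨h1, h2, h3⟩ => Prod.ext h1 (Prod.ext h2 h3),
        fun h => by subst h; exact ⟨rfl, rfl, rfl⟩⟩
    exact (hobs (Tmap ω)).trans (Tmap_fiber y d z ω)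
  have h2 : pr Q {ω : Latent 𝒴 D Z | ω.1 d = y ∧ ω.2.1 z = d ∧ ω.2.2 = z}
      = pr Q {ω : Latent 𝒴 D Z | (ω.1 d = y ∧ ω.2.1 z = d) ∧ ω.2.2 = z} :=
    pr_congr _ fun ω => by tauto
  rw [h1, h2, exog_event hE (fun yd dzv => yd d = y ∧ dzv z = d) z, hZ]

lemma transferD {Q : ProbMass (Latent 𝒴 D Z)} {P : ProbMass (Obs 𝒴 D Z)}
    (hE : Exog Q) (hR : Rationalizes Q P) (d : D) (z : Z) :
    pr Q {ω | ω.2.1 z = d} * prZ P z = pr P {o | o.2.1 = d ∧ o.2.2 = z} := by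
  have hZ : prZ P z = pr Q {ω | ω.2.2 = z} := rat_pr hR (fun o => o.2.2 = z)
  have h1 : pr P {o | o.2.1 = d ∧ o.2.2 = z}
      = pr Q {ω | ω.2.1 z = d ∧ ω.2.2 = z} := by
    rw [rat_pr hR (fun o => o.2.1 = d ∧ o.2.2 = z)]
    refine pr_congr Q fun ω => ?_
    show (ω.2.1 ω.2.2 = d ∧ ω.2.2 = z) ↔ _
    constructor
    · rintro ⟨ha, hb⟩; rw [hb] at ha; exact ⟨ha, hb⟩
    · rintro ⟨ha, hb⟩; exact ⟨by rw [hb]; exact ha, hb⟩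
  rw [h1, exog_event hE (fun _ dzv => dzv z = d) z, hZ]

end Construction
/-- Corollary 3.2: adding generalized monotonicity to instrument exogeneity
does not change the identified set for the vector of average potential outcomes whenever
these assumptions are consistent with `P`. -/
theorem genMono_no_identifying_power_beyond_exogeneity
    (𝒴 : Finset ℝ) (h𝒴 : 2 ≤ 𝒴.card)
    (D Z : Type) [Fintype D] [DecidableEq D] [Nontrivial D]
    [Fintype Z] [DecidableEq Z] [Nontrivial Z]
    (P : ProbMass (Obs 𝒴 D Z))
    (hP : ∀ z : Z, 0 < prZ P z)
    (hne : (Q0 P {Q : ProbMass (Latent 𝒴 D Z) | Exog Q ∧ GenMono Q}).Nonempty) :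
    Theta0 P {Q : ProbMass (Latent 𝒴 D Z) | Exog Q ∧ GenMono Q}
      = Theta0 P {Q : ProbMass (Latent 𝒴 D Z) | Exog Q} := by
  classical
  obtain ⟨QM, ⟨⟨hQMe, hQMm⟩, hQMr⟩⟩ := hne
  apply Set.Subset.antisymm
  · rintro t ⟨Q, ⟨⟨hQe, _⟩, hQr⟩, ht⟩
    exact ⟨Q, ⟨hQe, hQr⟩, ht⟩
  · rintro t ⟨Q, ⟨hQe, hQr⟩, ht⟩
    have hY : 𝒴.Nonempty := Finset.card_pos.mp (by omega)
    obtain ⟨y0⟩ : Nonempty ↥𝒴 := ⟨⟨hY.choose, hY.choose_spec⟩⟩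
    choose zs hzs using hQMm
    refine ⟨QC QM Q zs y0, ⟨⟨QC_exog QM Q zs y0, ?_⟩, QC_rat QM Q zs y0 P hQMe hQMr⟩, ?_⟩
    · intro d
      refine ⟨zs d, ?_⟩
      unfold MaxEnc
      rw [QC_marg QM Q zs y0 (fun dzv => dzv (zs d) ≠ d ∧ ∃ z' : Z, dzv z' = d)]
      exact hzs d
    · rw [← ht]
      funext d
      have hMa := hzs d
      unfold MaxEnc at hMa
      have hA : ∀ y : ↥𝒴, pr QM {ω | ω.1 d = y ∧ ∃ z', ω.2.1 z' = d}
          = pr QM {ω | ω.1 d = y ∧ ω.2.1 (zs d) = d} := by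
        intro y
        have hs := pr_split QM (fun ω => ω.1 d = y ∧ ∃ z', ω.2.1 z' = d)
          (fun ω => ω.2.1 (zs d) = d)
        have hzero : pr QM {ω : Latent 𝒴 D Z |
            (ω.1 d = y ∧ ∃ z', ω.2.1 z' = d) ∧ ¬ ω.2.1 (zs d) = d} = 0 :=
          pr_eq_zero QM hMa (fun ω h => ⟨h.2, h.1.2⟩)
        have hcg : pr QM {ω : Latent 𝒴 D Z |
            (ω.1 d = y ∧ ∃ z', ω.2.1 z' = d) ∧ ω.2.1 (zs d) = d}
            = pr QM {ω : Latent 𝒴 D Z | ω.1 d = y ∧ ω.2.1 (zs d) = d} :=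
          pr_congr QM fun ω => ⟨fun h => ⟨h.1.1, h.2⟩, fun h => ⟨⟨h.1, ⟨zs d, h.2⟩⟩, h.2⟩⟩
        rw [hs, hzero, hcg, add_zero]
      have hB : pr QM {ω | ¬ ∃ z', ω.2.1 z' = d} = pr QM {ω | ω.2.1 (zs d) ≠ d} := by
        have hs := pr_split QM (fun ω => ω.2.1 (zs d) ≠ d) (fun ω => ∃ z', ω.2.1 z' = d)
        rw [hMa, zero_add] at hs
        have hcg : pr QM {ω : Latent 𝒴 D Z | ω.2.1 (zs d) ≠ d ∧ ¬ ∃ z', ω.2.1 z' = d}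
            = pr QM {ω : Latent 𝒴 D Z | ¬ ∃ z', ω.2.1 z' = d} :=
          pr_congr QM fun ω => ⟨fun h => h.2, fun h => ⟨fun he => h ⟨zs d, he⟩, h⟩⟩
        rw [← hcg, ← hs]
      have hprZ : prZ P (zs d) ≠ 0 := ne_of_gt (hP (zs d))
      have hT1 : ∀ y : ↥𝒴, pr QM {ω | ω.1 d = y ∧ ω.2.1 (zs d) = d}
          = pr Q {ω | ω.1 d = y ∧ ω.2.1 (zs d) = d} := fun y =>
        mul_right_cancel₀ hprZ
          ((transferY hQMe hQMr y d (zs d)).trans (transferY hQe hQr y d (zs d)).symm)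
      have hTD : pr QM {ω | ω.2.1 (zs d) = d} = pr Q {ω | ω.2.1 (zs d) = d} :=
        mul_right_cancel₀ hprZ
          ((transferD hQMe hQMr d (zs d)).trans (transferD hQe hQr d (zs d)).symm)
      have hT2 : pr QM {ω | ω.2.1 (zs d) ≠ d} = pr Q {ω | ω.2.1 (zs d) ≠ d} := by
        rw [pr_not QM (fun ω => ω.2.1 (zs d) = d), pr_not Q (fun ω => ω.2.1 (zs d) = d), hTD]
      have hthQ : theta Q d = ∑ y : ↥𝒴, pr Q {ω | ω.1 d = y} * (y : ℝ) :=
        expect_fiber Q (fun ω => ω.1 d) (fun y => (y : ℝ))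
      rw [QC_theta QM Q zs y0 d, hthQ]
      trans (∑ y : ↥𝒴, pr Q {ω : Latent 𝒴 D Z | ω.1 d = y ∧ ω.2.1 (zs d) = d} * (y : ℝ))
        + pr Q {ω : Latent 𝒴 D Z | ω.2.1 (zs d) ≠ d} *
          (∑ y : ↥𝒴, lam Q zs y0 d y * (y : ℝ))
      · rw [hB, hT2]
        congr 1
        refine Finset.sum_congr rfl fun y _ => ?_
        rw [hA y, hT1 y]
      · by_cases hn : pr Q {ω : Latent 𝒴 D Z | ω.2.1 (zs d) ≠ d} = 0
        · rw [hn, zero_mul, add_zero]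
          refine Finset.sum_congr rfl fun y _ => ?_
          congr 1
          have hs := pr_split Q (fun ω => ω.1 d = y) (fun ω => ω.2.1 (zs d) = d)
          have h0 : pr Q {ω : Latent 𝒴 D Z | ω.1 d = y ∧ ¬ ω.2.1 (zs d) = d} = 0 :=
            pr_eq_zero Q hn (fun ω h => h.2)
          rw [hs, h0, add_zero]
        · have hlam : ∀ y : ↥𝒴, lam Q zs y0 d y
              = pr Q {ω | ω.1 d = y ∧ ω.2.1 (zs d) ≠ d}
                / pr Q {ω | ω.2.1 (zs d) ≠ d} := fun y => by
            unfold lam; rw [if_neg hn]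
          trans (∑ y : ↥𝒴, (pr Q {ω : Latent 𝒴 D Z | ω.1 d = y ∧ ω.2.1 (zs d) = d} * (y : ℝ)
            + pr Q {ω : Latent 𝒴 D Z | ω.1 d = y ∧ ω.2.1 (zs d) ≠ d} * (y : ℝ)))
          · rw [Finset.sum_add_distrib]
            congr 1
            rw [Finset.mul_sum]
            refine Finset.sum_congr rfl fun y _ => ?_
            rw [hlam y]
            field_simp
          · refine Finset.sum_congr rfl fun y _ => ?_
            rw [← add_mul]
            congr 1
            have hs := pr_split Q (fun ω => ω.1 d = y) (fun ω => ω.2.1 (zs d) = d)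
            rw [← hs]
end

section
/- Let q and q* be nonnegative functions on 𝒴^𝒟 × 𝒟^𝒵, and fix numbers (p_{yd|z})_{y∈𝒴, d∈𝒟, z∈𝒵}. Say a function q satisfies (*) if p_{yd|z} = Σ_{(r^o, r^t) : r^o_d = y, r^t_z = d} q(r^o, r^t) for all y ∈ 𝒴, d ∈ 𝒟, z ∈ 𝒵. For r^t ∈ 𝒟^𝒵, let 𝒩(r^t) := {d ∈ 𝒟 : r^t_z ≠ d for all z ∈ 𝒵}, and for a function r^o_c : 𝒟∖𝒩(r^t) → 𝒴 write q(r^o_c, r^t) for the sum of q(r^o, r^t) over all r^o ∈ 𝒴^𝒟 whose restriction to 𝒟∖𝒩(r^t) equals r^o_c. Suppose q satisfies (*), and suppose that for every r^t ∈ 𝒟^𝒵 and every r^o_c : 𝒟∖𝒩(r^t) → 𝒴 one has q*(r^o_c, r^t) = q(r^o_c, r^t). Then q* satisfies (*). -/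
open Finset

/-- Lemma A.1: if `q` satisfies the data-matching equations (*) and `q*`
has the same "complier marginals" `q*(r^o_c, r^t) = q(r^o_c, r^t)` for every treatment
response type `r^t` and every assignment `r^o_c` of outcomes to treatments that `r^t`
takes for some instrument value, then `q*` also satisfies (*). -/
theorem qstar_satisfies_matching
    (YY DD ZZ : Type) [Fintype YY] [DecidableEq YY] [Nontrivial YY]
    [Fintype DD] [DecidableEq DD] [Nontrivial DD]
    [Fintype ZZ] [DecidableEq ZZ] [Nontrivial ZZ]
    (q qstar : (DD → YY) × (ZZ → DD) → ℝ)
    (hq : ∀ r, 0 ≤ q r) (hqstar : ∀ r, 0 ≤ qstar r)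
    (p : YY → DD → ZZ → ℝ)
    (hsat : ∀ (y : YY) (d : DD) (z : ZZ),
      p y d z = ∑ r : (DD → YY) × (ZZ → DD), if r.1 d = y ∧ r.2 z = d then q r else 0)
    (hmatch : ∀ (rt : ZZ → DD) (roc : DD → YY),
      (∑ ro : DD → YY, if (∀ d : DD, (∃ z : ZZ, rt z = d) → ro d = roc d)
          then qstar (ro, rt) else 0)
        = (∑ ro : DD → YY, if (∀ d : DD, (∃ z : ZZ, rt z = d) → ro d = roc d)
          then q (ro, rt) else 0)) :
    ∀ (y : YY) (d : DD) (z : ZZ),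
      p y d z = ∑ r : (DD → YY) × (ZZ → DD), if r.1 d = y ∧ r.2 z = d then qstar r else 0 := by
  classical
  intro y d z
  have key : ∀ rt : ZZ → DD, (∃ z : ZZ, rt z = d) →
      (∑ ro : DD → YY, if ro d = y then qstar (ro, rt) else 0)
        = (∑ ro : DD → YY, if ro d = y then q (ro, rt) else 0) := by
    intro rt hd
    set f : (DD → YY) → (DD → YY) :=
      fun ro d' => if ∃ z : ZZ, rt z = d' then ro d' else y with hf
    have hfd : ∀ ro, f ro d = ro d := fun ro => if_pos hd
    have hmem : ∀ roc ro, f ro = roc → f roc = roc := by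
      intro roc ro h
      subst h
      funext d'
      by_cases h' : ∃ z : ZZ, rt z = d' <;> simp [hf, h']
    have hfiber : ∀ roc, f roc = roc → ∀ ro : DD → YY,
        (f ro = roc ↔ ∀ d', (∃ z : ZZ, rt z = d') → ro d' = roc d') := by
      intro roc hroc ro
      constructor
      · intro h d' hd'
        rw [← h]; simp [hf, hd']
      · intro h
        funext d'
        by_cases h' : ∃ z : ZZ, rt z = d'
        · simp [hf, h', h d' h']
        · conv_rhs => rw [← hroc]
          simp [hf, h']
    have split : ∀ g : (DD → YY) → ℝ,
        (∑ ro : DD → YY, if ro d = y then g ro else 0)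
        = ∑ roc : DD → YY, if f roc = roc ∧ roc d = y then
            (∑ ro : DD → YY,
              if (∀ d', (∃ z : ZZ, rt z = d') → ro d' = roc d') then g ro else 0) else 0 := by
      intro g
      rw [← Finset.sum_fiberwise univ f (fun ro => if ro d = y then g ro else 0)]
      apply Finset.sum_congr rfl
      intro roc _
      by_cases hroc : f roc = roc
      · rw [Finset.sum_filter]
        by_cases hy : roc d = y
        · rw [if_pos ⟨hroc, hy⟩]
          apply Finset.sum_congr rfl
          intro ro _
          by_cases hc : ∀ d', (∃ z : ZZ, rt z = d') → ro d' = roc d'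
          · rw [if_pos ((hfiber roc hroc ro).mpr hc), if_pos hc,
              if_pos (by rw [hc d hd, hy])]
          · rw [if_neg (fun h => hc ((hfiber roc hroc ro).mp h)), if_neg hc]
        · rw [if_neg (by tauto)]
          apply Finset.sum_eq_zero
          intro ro _
          by_cases hc : f ro = roc
          · rw [if_pos hc, if_neg]
            intro h
            exact hy (by rw [← hc, hfd, h])
          · rw [if_neg hc]
      · rw [if_neg (by tauto)]
        apply Finset.sum_eq_zero
        intro ro hro
        exact absurd (hmem roc ro (Finset.mem_filter.mp hro).2) hroc
    rw [split (fun ro => qstar (ro, rt)), split (fun ro => q (ro, rt))]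
    apply Finset.sum_congr rfl
    intro roc _
    by_cases hroc : f roc = roc ∧ roc d = y
    · rw [if_pos hroc, if_pos hroc, hmatch rt roc]
    · rw [if_neg hroc, if_neg hroc]
  rw [hsat y d z, Fintype.sum_prod_type, Fintype.sum_prod_type]
  rw [Finset.sum_comm, Finset.sum_comm (f := fun ro rt =>
    if ro d = y ∧ rt z = d then qstar (ro, rt) else 0)]
  apply Finset.sum_congr rfl
  intro rt _
  by_cases hzd : rt z = d
  · calc (∑ ro : DD → YY, if ro d = y ∧ rt z = d then q (ro, rt) else 0)
        = ∑ ro : DD → YY, if ro d = y then q (ro, rt) else 0 := by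
          apply Finset.sum_congr rfl; intro ro _; simp [hzd]
      _ = ∑ ro : DD → YY, if ro d = y then qstar (ro, rt) else 0 := (key rt ⟨z, hzd⟩).symm
      _ = ∑ ro : DD → YY, if ro d = y ∧ rt z = d then qstar (ro, rt) else 0 := by
          apply Finset.sum_congr rfl; intro ro _; simp [hzd]
  · apply Finset.sum_congr rfl
    intro ro _
    rw [if_neg (fun h => hzd h.2), if_neg (fun h => hzd h.2)]
end

section
/- Let 𝒟 and 𝒵 be finite nonempty sets, g : 𝒵 × 𝒟 → ℝ, u ∈ ℝ^𝒟, and let D : 𝒵 → 𝒟 be any selection of utility maximizers, i.e., g(z, D(z)) + u_{D(z)} ≥ g(z, d') + u_{d'} for all z ∈ 𝒵 and d' ∈ 𝒟. Fix d ∈ 𝒟 and suppose z* ∈ 𝒵 uniformly targets d: g(z*, d) − g(z*, d') > g(z, d) − g(z, d') for all d' ≠ d and all z ≠ z*. Then if D(z') = d for some z' ∈ 𝒵, necessarily D(z*) = d; equivalently, it cannot hold that D(z*) ≠ d while D(z') = d for some z' ∈ 𝒵. -/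
/-- Example 4.4, deterministic core: in an additive utility model, if `z*`
uniformly targets treatment `d`, then any selection of utility maximizers that chooses `d`
at some instrument value must choose `d` at `z*`. -/
theorem uniform_targeting_max_encourages
    (𝒟 𝒵 : Type) [Fintype 𝒟] [Nonempty 𝒟] [Fintype 𝒵] [Nonempty 𝒵]
    (g : 𝒵 → 𝒟 → ℝ) (u : 𝒟 → ℝ)
    (Dsel : 𝒵 → 𝒟)
    (hmax : ∀ (z : 𝒵) (d' : 𝒟), g z d' + u d' ≤ g z (Dsel z) + u (Dsel z))
    (d : 𝒟) (zstar : 𝒵)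
    (htarget : ∀ d' : 𝒟, d' ≠ d → ∀ z : 𝒵, z ≠ zstar →
      g z d - g z d' < g zstar d - g zstar d') :
    (∃ z' : 𝒵, Dsel z' = d) → Dsel zstar = d := by
  rintro ⟨z', hz'⟩
  by_contra hne
  by_cases hzz : z' = zstar
  · exact hne (hzz ▸ hz')
  · have h1 := hmax zstar d
    have h2 := hmax z' (Dsel zstar)
    rw [hz'] at h2
    have h3 := htarget (Dsel zstar) hne z' hzz
    linarith
end

section
/- Suppose 𝒟 = 𝒵 = {0, 1, 2} and the latent distribution Q satisfies: (i) Q{D_0 = 1 and D_1 ≠ 1} = 0; (ii) Q{D_0 = 2 and D_2 ≠ 2} = 0; (iii) Q{D_0 ≠ 1 and D_1 ≠ 1 and 1{D_1 = 2} ≠ 1{D_0 = 2}} = 0; (iv) Q{D_0 ≠ 2 and D_2 ≠ 2 and 1{D_2 = 1} ≠ 1{D_0 = 1}} = 0. Then for each d ∈ {0, 1, 2}, Q{D_d ≠ d and D_{z'} = d for some z' ≠ d} = 0; that is, Q satisfies generalized monotonicity with z*(d) = d for every d. -/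
open Finset

variable {𝒴 : Finset ℝ} {D Z : Type} [Fintype D] [DecidableEq D] [Fintype Z] [DecidableEq Z]

/-! An event is `Q`-null exactly when every atom in it has mass zero, so the claim reduces to
a statement about a single response type `f = (D_z)_z : Fin 3 → Fin 3` avoiding the four
excluded patterns: every value `f z` is a fixed point of `f`, i.e. the instrument value `d`
encourages treatment `d` whenever any instrument value does. Among the 27 response types this
is a finite check. -/

lemma pr_eq_zero_iff {α : Type} [Fintype α] (Q : ProbMass α) (A : Set α) :
    pr Q A = 0 ↔ ∀ a ∈ A, Q.mass a = 0 := by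
  unfold pr
  rw [Finset.sum_eq_zero_iff_of_nonneg fun a _ => Set.indicator_nonneg (fun a _ => Q.nonneg a) a]
  simp only [Finset.mem_univ, true_implies, Set.indicator_apply_eq_zero]

lemma apply_apply_eq_of_klm_restrictions (f : Fin 3 → Fin 3)
    (h1 : ¬ (f 0 = 1 ∧ f 1 ≠ 1))
    (h2 : ¬ (f 0 = 2 ∧ f 2 ≠ 2))
    (h3 : ¬ (f 0 ≠ 1 ∧ f 1 ≠ 1 ∧ ¬ ((f 1 = 2) ↔ (f 0 = 2))))
    (h4 : ¬ (f 0 ≠ 2 ∧ f 2 ≠ 2 ∧ ¬ ((f 2 = 1) ↔ (f 0 = 1))))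
    (z : Fin 3) : f (f z) = f z := by
  revert f z
  decide

theorem klm_genMono_general
    (𝒴 : Finset ℝ)
    (Q : ProbMass (Latent 𝒴 (Fin 3) (Fin 3)))
    (h1 : pr Q {ω | ω.2.1 0 = 1 ∧ ω.2.1 1 ≠ 1} = 0)
    (h2 : pr Q {ω | ω.2.1 0 = 2 ∧ ω.2.1 2 ≠ 2} = 0)
    (h3 : pr Q {ω | ω.2.1 0 ≠ 1 ∧ ω.2.1 1 ≠ 1 ∧ ¬ ((ω.2.1 1 = 2) ↔ (ω.2.1 0 = 2))} = 0)
    (h4 : pr Q {ω | ω.2.1 0 ≠ 2 ∧ ω.2.1 2 ≠ 2 ∧ ¬ ((ω.2.1 2 = 1) ↔ (ω.2.1 0 = 1))} = 0) :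
    ∀ d : Fin 3, pr Q {ω | ω.2.1 d ≠ d ∧ ∃ z' : Fin 3, z' ≠ d ∧ ω.2.1 z' = d} = 0 := by
  intro d
  simp only [pr_eq_zero_iff] at h1 h2 h3 h4 ⊢
  rintro ω ⟨hne, z, -, rfl⟩
  by_contra hω
  exact hne <| apply_apply_eq_of_klm_restrictions ω.2.1 (fun h => hω (h1 ω h))
    (fun h => hω (h2 ω h)) (fun h => hω (h3 ω h)) (fun h => hω (h4 ω h)) z

/-- Kirkeboen–Leuven–Mogstad, Example C.3: with `𝒟 = 𝒵 = {0,1,2}`, the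
monotonicity restrictions (i)–(ii) and the irrelevance restrictions (iii)–(iv) imply
generalized monotonicity with `z*(d) = d` for every `d`. -/
theorem klm_genMono
    (𝒴 : Finset ℝ) (h𝒴 : 2 ≤ 𝒴.card)
    (Q : ProbMass (Latent 𝒴 (Fin 3) (Fin 3)))
    (h1 : pr Q {ω | ω.2.1 0 = 1 ∧ ω.2.1 1 ≠ 1} = 0)
    (h2 : pr Q {ω | ω.2.1 0 = 2 ∧ ω.2.1 2 ≠ 2} = 0)
    (h3 : pr Q {ω | ω.2.1 0 ≠ 1 ∧ ω.2.1 1 ≠ 1 ∧ ¬ ((ω.2.1 1 = 2) ↔ (ω.2.1 0 = 2))} = 0)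
    (h4 : pr Q {ω | ω.2.1 0 ≠ 2 ∧ ω.2.1 2 ≠ 2 ∧ ¬ ((ω.2.1 2 = 1) ↔ (ω.2.1 0 = 1))} = 0) :
    ∀ d : Fin 3, pr Q {ω | ω.2.1 d ≠ d ∧ ∃ z' : Fin 3, z' ≠ d ∧ ω.2.1 z' = d} = 0 :=
  klm_genMono_general 𝒴 Q h1 h2 h3 h4
end

section
/- Let 𝒟 and 𝒵 be finite sets and g : 𝒵 × 𝒟 → ℝ satisfy strict one-to-one targeting: there exist a nonempty set 𝒟† ⊆ 𝒟 of targeted treatments with 𝒟∖𝒟† nonempty, an injective map z† : 𝒟† → 𝒵, and for each d ∈ 𝒟† real numbers Ū(d) > U̲(d) such that g(z†(d), d) = Ū(d) and g(z, d) = U̲(d) for all z ≠ z†(d), while for each d ∈ 𝒟∖𝒟† the value g(z, d) is the same for all z ∈ 𝒵. If |𝒵| ≥ 3, then for every non-targeted treatment d ∈ 𝒟∖𝒟† there exists no z* ∈ 𝒵 satisfying the uniform targeting condition g(z*, d) − g(z*, d') > g(z, d) − g(z, d') for all d' ≠ d and all z ≠ z*. -/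
/-- Appendix B.1, Lee–Salanié strict one-to-one targeting: if `g` satisfies
strict one-to-one targeting, with a nonempty set `𝒟†` of targeted treatments, a nonempty
set of non-targeted treatments, and `|𝒵| ≥ 3`, then no non-targeted treatment admits an
instrument value satisfying the uniform targeting condition. -/
theorem no_uniform_targeting_for_nontargeted
    (𝒟 𝒵 : Type) [Fintype 𝒟] [DecidableEq 𝒟] [Fintype 𝒵] [DecidableEq 𝒵]
    (g : 𝒵 → 𝒟 → ℝ)
    (Ddag : Finset 𝒟) (hDdag : Ddag.Nonempty) (hcomp : ∃ d : 𝒟, d ∉ Ddag)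
    (zdag : 𝒟 → 𝒵)
    (hinj : ∀ d ∈ Ddag, ∀ d' ∈ Ddag, zdag d = zdag d' → d = d')
    (Ubar Ulow : 𝒟 → ℝ)
    (hgap : ∀ d ∈ Ddag, Ulow d < Ubar d)
    (htar : ∀ d ∈ Ddag, g (zdag d) d = Ubar d ∧ ∀ z : 𝒵, z ≠ zdag d → g z d = Ulow d)
    (hnontar : ∀ d ∉ Ddag, ∀ z z' : 𝒵, g z d = g z' d)
    (hZ : 3 ≤ Fintype.card 𝒵) :
    ∀ d ∉ Ddag, ¬ ∃ zstar : 𝒵, ∀ d' : 𝒟, d' ≠ d → ∀ z : 𝒵, z ≠ zstar →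
      g z d - g z d' < g zstar d - g zstar d' := by
  intro d hd ⟨zstar, hz⟩
  obtain ⟨d', hd'⟩ := hDdag
  have hne : d' ≠ d := fun h => hd (h ▸ hd')
  obtain ⟨hU, hL⟩ := htar d' hd'
  -- find z ≠ zstar and z ≠ zdag d'
  have hcard : 0 < ((Finset.univ.erase zstar).erase (zdag d')).card := by
    have h1 : Fintype.card 𝒵 - 2 ≤ ((Finset.univ.erase zstar).erase (zdag d')).card := by
      calc Fintype.card 𝒵 - 2 = (Finset.univ : Finset 𝒵).card - 1 - 1 := by
            rw [Finset.card_univ]; omega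
        _ ≤ (Finset.univ.erase zstar).card - 1 := by
            have := Finset.pred_card_le_card_erase (s := (Finset.univ : Finset 𝒵)) (a := zstar)
            omega
        _ ≤ _ := Finset.pred_card_le_card_erase
    omega
  obtain ⟨z, hzmem⟩ := Finset.card_pos.mp hcard
  simp only [Finset.mem_erase, Finset.mem_univ, and_true] at hzmem
  obtain ⟨hz1, hz2⟩ := hzmem
  have key := hz d' hne z hz2
  have hgd : g z d = g zstar d := hnontar d hd z zstar
  have hgz : g z d' = Ulow d' := hL z hz1
  by_cases hc : zstar = zdag d'
  · -- g zstar d' = Ubar d' > Ulow d' = g z d'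
    subst hc
    have := hgap d' hd'
    linarith
  · have hgzs : g zstar d' = Ulow d' := hL zstar hc
    rw [hgd, hgzs, hgz] at key
    linarith
end
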